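/- arXiv:1309.6694 — 5 statements merged into one kernel-verified Lean document; each statement's English description precedes it below -/
import Mathlib

section
/- Open submodules are essential: Let M be a Noetherian module over a ring R and let N be an open submodule of M, i.e. len_R(N) = len_R(M). Then N is essential in M: every submodule H of M with H ∩ N = 0 is the zero submodule. -/
open Ordinal

universe u

lemma rank_le_of_strictMono' {α β : Type u} [Preorder α] [Preorder β]
    [WellFoundedGT α] [WellFoundedGT β] (f : α → β) (hf : StrictMono f) (x : α) :
    IsWellFounded.rank (α := α) (· > ·) x ≤ IsWellFounded.rank (α := β) (· > ·) (f x) := by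
  induction x using IsWellFounded.induction (α := α) (· > ·) with
  | ind x IH =>
    rw [IsWellFounded.rank_eq]
    apply Ordinal.iSup_le
    rintro ⟨b, hb⟩
    rw [Order.succ_le_iff]
    exact lt_of_le_of_lt (IH b hb) (IsWellFounded.rank_lt_of_rel (hf hb))

/-- The ordinal length of a Noetherian module: the foundation rank of the zero submodule
in the lattice of submodules ordered by reverse inclusion. -/
noncomputable def moduleLength (R M : Type u) [Ring R] [AddCommGroup M]
    [Module R M] [IsNoetherian R M] : Ordinal.{u} :=
  IsWellFounded.rank (α := Submodule R M) (· > ·) ⊥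

/-- **Open submodules are essential.** If `N` is an open submodule of a Noetherian module `M`
(i.e. `len N = len M`), then every submodule meeting `N` trivially is zero. -/
theorem open_submodule_essential (R M : Type u) [Ring R] [AddCommGroup M] [Module R M]
    [IsNoetherian R M] (N : Submodule R M)
    (hopen : moduleLength R ↥N = moduleLength R M) :
    ∀ H : Submodule R M, H ⊓ N = ⊥ → H = ⊥ := by
  intro H hH
  by_contra hne
  set g : Submodule R ↥N → Submodule R M := fun P => P.map N.subtype ⊔ H with hg
  have key : ∀ P : Submodule R ↥N, g P ⊓ N = P.map N.subtype := by
    intro P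
    rw [hg, sup_inf_assoc_of_le H (Submodule.map_subtype_le N P), hH, sup_bot_eq]
  have hgmono : StrictMono g := by
    intro P Q hPQ
    have hmap : P.map N.subtype < Q.map N.subtype :=
      Submodule.map_strictMono_of_injective (Submodule.injective_subtype N) hPQ
    refine lt_of_le_of_ne (sup_le_sup_right hmap.le H) ?_
    intro h
    rw [← key P, ← key Q, h] at hmap
    exact lt_irrefl _ hmap
  have h1 : moduleLength R ↥N ≤ IsWellFounded.rank (α := Submodule R M) (· > ·) (g ⊥) :=
    rank_le_of_strictMono' g hgmono ⊥
  have hg0 : g ⊥ = H := by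
    rw [hg]; simp
  have h2 : IsWellFounded.rank (α := Submodule R M) (· > ·) H <
      moduleLength R M :=
    IsWellFounded.rank_lt_of_rel (bot_lt_iff_ne_bot.mpr hne)
  rw [hg0] at h1
  exact absurd hopen (ne_of_lt (lt_of_le_of_lt h1 h2))
end

section
/- Let (R, m) be a Noetherian local ring which is not Artinian. Then the maximal ideal m is open: the length of m as an R-module equals the length of R, i.e. len_R(m) = len_R(R). -/
/-!
Submodules of `m` are the same as ideals contained in `m`, and in a local ring these are all
ideals except `⊤`. So a chain of ideals is a chain of submodules of `m`, possibly topped by `⊤`,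
which gives `len m ≤ len R ≤ 1 + len m`. A non-Artinian ring has an infinite strictly descending
chain of ideals, so `len R ≥ ω`; hence `len m ≥ ω` as well, and then `1 + len m = len m`.
-/

open Ordinal

universe u

namespace IsWellFounded

variable {α β : Type u}

theorem rank_le_rank_apply_of_strictMono [Preorder α] [Preorder β] [WellFoundedGT α]
    [WellFoundedGT β] {f : β → α} (hf : StrictMono f) (b : β) :
    rank (α := β) (· > ·) b ≤ rank (α := α) (· > ·) (f b) := by
  induction b using IsWellFounded.induction (· > · : β → β → Prop) with
  | ind b ih =>
    rw [rank_eq]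
    exact Ordinal.iSup_le fun ⟨b', hb⟩ ↦
      Order.succ_le_of_lt ((ih b' hb).trans_lt (rank_lt_of_rel (hf hb)))

theorem omega0_le_rank_bot [Preorder α] [OrderBot α] [WellFoundedGT α] (h : ¬WellFoundedLT α) :
    ω ≤ rank (α := α) (· > ·) ⊥ := by
  obtain ⟨f, hf⟩ : Nonempty { f : ℕ → α // ∀ n, f (n + 1) < f n } := by
    rw [← not_isEmpty_iff, ← wellFounded_iff_isEmpty_descending_chain]
    exact fun hwf ↦ h ⟨hwf⟩
  have hrank (n : ℕ) : (n : Ordinal) ≤ rank (α := α) (· > ·) (f n) := by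
    induction n with
    | zero => simp
    | succ n ih => exact_mod_cast Order.add_one_le_of_lt (ih.trans_lt (rank_lt_of_rel (hf n)))
  exact omega0_le.2 fun n ↦
    (hrank n).trans (rank_lt_of_rel (r := (· > ·)) (bot_le.trans_lt (hf n))).le

theorem rank_top [Preorder α] [OrderTop α] [WellFoundedGT α] :
    rank (α := α) (· > ·) ⊤ = 0 := by
  rw [rank_eq]
  have : IsEmpty { b : α // b > ⊤ } := ⟨fun ⟨_, hb⟩ ↦ not_top_lt hb⟩
  simp

theorem rank_apply_le_one_add_rank [Preorder α] [OrderTop α] [WellFoundedGT α] [Preorder β]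
    [WellFoundedGT β] (f : β ↪o α) (hf : ∀ a ≠ ⊤, a ∈ Set.range f) (b : β) :
    rank (α := α) (· > ·) (f b) ≤ 1 + rank (α := β) (· > ·) b := by
  induction b using IsWellFounded.induction (· > · : β → β → Prop) with
  | ind b ih =>
    rw [rank_eq]
    refine Ordinal.iSup_le fun ⟨a, ha⟩ ↦ ?_
    rcases eq_or_ne a ⊤ with rfl | hne
    · simp [rank_top]
    obtain ⟨b', rfl⟩ := hf a hne
    have hb : b' > b := f.lt_iff_lt.1 ha
    calc Order.succ (rank (α := α) (· > ·) (f b'))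
        ≤ Order.succ (1 + rank (α := β) (· > ·) b') := Order.succ_le_succ (ih b' hb)
      _ = 1 + Order.succ (rank (α := β) (· > ·) b') := by
          simp only [Order.succ_eq_add_one, add_assoc]
      _ ≤ 1 + rank (α := β) (· > ·) b := by
          gcongr
          exact Order.succ_le_of_lt (rank_lt_of_rel hb)

end IsWellFounded

/-- In a non-Artinian Noetherian local ring, the maximal ideal is open:
`len m = len R`. -/
theorem maximalIdeal_open (R : Type u) [CommRing R] [IsNoetherianRing R] [IsLocalRing R]
    (hart : ¬ IsArtinianRing R) :
    moduleLength R ↥(IsLocalRing.maximalIdeal R) = moduleLength R R := by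
  set m := IsLocalRing.maximalIdeal R
  set e := Submodule.MapSubtype.orderEmbedding m
  have he_bot : e ⊥ = ⊥ := by simp [e, Submodule.map_subtype_embedding_eq]
  have he_range (I : Ideal R) (hI : I ≠ ⊤) : I ∈ Set.range e :=
    ⟨Submodule.comap m.subtype I, by
      simpa [e, Submodule.map_subtype_embedding_eq] using IsLocalRing.le_maximalIdeal hI⟩
  have h_le : moduleLength R m ≤ moduleLength R R := by
    unfold moduleLength
    rw [← he_bot]
    exact IsWellFounded.rank_le_rank_apply_of_strictMono e.strictMono ⊥
  have h_ge : moduleLength R R ≤ 1 + moduleLength R m := by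
    unfold moduleLength
    rw [← he_bot]
    exact IsWellFounded.rank_apply_le_one_add_rank e he_range ⊥
  have h_inf : ω ≤ moduleLength R m := by
    refine le_of_not_gt fun h ↦ ?_
    exact ((IsWellFounded.omega0_le_rank_bot hart).trans h_ge).not_gt
      (isPrincipal_add_omega0 one_lt_omega0 h)
  exact h_le.antisymm (by rwa [one_add_of_omega0_le h_inf] at h_ge)
end

section
/- Every nonzero ideal in a Noetherian domain of finite Krull dimension is open: if R is a Noetherian integral domain of finite Krull dimension and I is a nonzero ideal of R, then len_R(I) = len_R(R). -/
open Ordinal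

universe u

theorem rank_le_rank_of_relHom {α β : Type u} {r : α → α → Prop} {s : β → β → Prop}
    [IsWellFounded α r] [IsWellFounded β s] (f : α → β)
    (hf : ∀ a b, r a b → s (f a) (f b)) (a : α) :
    IsWellFounded.rank r a ≤ IsWellFounded.rank s (f a) := by
  induction a using IsWellFounded.induction r with
  | _ a ih =>
    rw [IsWellFounded.rank_eq r]
    apply Ordinal.iSup_le
    rintro ⟨b, hb⟩
    rw [Order.succ_le_iff]
    exact lt_of_le_of_lt (ih b hb) (IsWellFounded.rank_lt_of_rel (hf b a hb))

theorem moduleLength_le_of_injective {R M N : Type u} [Ring R] [AddCommGroup M]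
    [AddCommGroup N] [Module R M] [Module R N] [IsNoetherian R M] [IsNoetherian R N]
    (f : M →ₗ[R] N) (hf : Function.Injective f) :
    moduleLength R M ≤ moduleLength R N := by
  have := rank_le_rank_of_relHom (r := ((· > ·) : Submodule R M → _ → Prop))
    (s := ((· > ·) : Submodule R N → _ → Prop)) (Submodule.map f)
    (fun a b h => Submodule.map_strictMono_of_injective hf h) ⊥
  simpa [moduleLength, Submodule.map_bot] using this

theorem moduleLength_eq_of_equiv {R M N : Type u} [Ring R] [AddCommGroup M]
    [AddCommGroup N] [Module R M] [Module R N] [IsNoetherian R M] [IsNoetherian R N]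
    (e : M ≃ₗ[R] N) : moduleLength R M = moduleLength R N :=
  le_antisymm (moduleLength_le_of_injective e.toLinearMap e.injective)
    (moduleLength_le_of_injective e.symm.toLinearMap e.symm.injective)

/-- Every nonzero ideal in a Noetherian domain of finite Krull dimension is open:
`len I = len R`. -/
theorem nonzero_ideal_open (R : Type u) [CommRing R] [IsDomain R] [IsNoetherianRing R]
    (hfin : ringKrullDim R ≠ ⊤) (I : Ideal R) (hI : I ≠ ⊥) :
    moduleLength R ↥I = moduleLength R R := by
  obtain ⟨a, haI, ha⟩ := (Submodule.ne_bot_iff I).mp hI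
  have hJI : (R ∙ a) ≤ I := (Submodule.span_singleton_le_iff_mem a I).mpr haI
  have h1 : moduleLength R R = moduleLength R ↥(R ∙ a) :=
    moduleLength_eq_of_equiv (LinearEquiv.toSpanNonzeroSingleton R R a ha)
  have h2 : moduleLength R ↥(R ∙ a) ≤ moduleLength R ↥I :=
    moduleLength_le_of_injective (Submodule.inclusion hJI)
      (Submodule.inclusion_injective hJI)
  have h3 : moduleLength R ↥I ≤ moduleLength R R :=
    moduleLength_le_of_injective I.subtype I.injective_subtype
  exact le_antisymm h3 (h1 ▸ h2)
end

section
/- An endomorphism with open kernel is nilpotent: Let M be a Noetherian module over a ring R and f : M → M an R-linear endomorphism whose kernel is open, i.e. len_R(ker f) = len_R(M). Then f is nilpotent: f^n = 0 for some n ≥ 1. -/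
open Ordinal

universe u

/-- Rank with respect to reverse order is monotone under strictly monotone maps. -/
theorem rank_le_rank_of_strictMono {α β : Type u} [Preorder α] [Preorder β]
    [WellFoundedGT α] [WellFoundedGT β] {g : α → β} (hg : StrictMono g) (a : α) :
    IsWellFounded.rank (α := α) (· > ·) a ≤ IsWellFounded.rank (α := β) (· > ·) (g a) := by
  induction a using IsWellFounded.induction (α := α) (· > ·) with
  | ind a IH =>
    rw [IsWellFounded.rank_eq]
    apply Ordinal.iSup_le
    rintro ⟨b, hb⟩
    have h1 : IsWellFounded.rank (α := β) (· > ·) (g b)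
        < IsWellFounded.rank (α := β) (· > ·) (g a) :=
      IsWellFounded.rank_lt_of_rel (hg hb)
    calc Order.succ (IsWellFounded.rank (α := α) (· > ·) b)
        ≤ Order.succ (IsWellFounded.rank (α := β) (· > ·) (g b)) := by
          exact Order.succ_le_succ (IH b hb)
      _ ≤ IsWellFounded.rank (α := β) (· > ·) (g a) := Order.succ_le_of_lt h1

/-- An endomorphism of a Noetherian module whose kernel is open is nilpotent. -/
theorem nilpotent_of_open_kernel (R M : Type u) [Ring R] [AddCommGroup M] [Module R M]
    [IsNoetherian R M] (f : M →ₗ[R] M)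
    (hker : moduleLength R ↥(LinearMap.ker f) = moduleLength R M) :
    ∃ n : ℕ, 1 ≤ n ∧ f ^ n = 0 := by
  -- `ker f` is essential: any submodule meeting it trivially is trivial.
  have hess : ∀ P : Submodule R M, P ⊓ LinearMap.ker f = ⊥ → P = ⊥ := by
    intro P hP
    by_contra hPne
    -- strictly monotone map from submodules of `ker f` to submodules of `M`
    set K := LinearMap.ker f
    set g : Submodule R ↥K → Submodule R M := fun S => S.map K.subtype ⊔ P with hg
    have hmono : StrictMono g := by
      intro S T hST
      have hle : g S ≤ g T :=
        sup_le_sup_right (Submodule.map_mono hST.le) P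
      refine lt_of_le_of_ne hle ?_
      intro heq
      apply hST.ne
      apply le_antisymm hST.le
      intro t ht
      have htK : (t : M) ∈ K := t.2
      have htg : (t : M) ∈ g S := by
        rw [heq]
        exact le_sup_left (α := Submodule R M) (Submodule.mem_map_of_mem ht)
      rcases Submodule.mem_sup.mp htg with ⟨s, hs, p, hp, hsp⟩
      rcases hs with ⟨s', hs', rfl⟩
      have hpK : p ∈ K := by
        have : p = (t : M) - (s' : M) := by rw [← hsp, Submodule.subtype_apply]; abel
        rw [this]
        exact sub_mem htK s'.2
      have hp0 : p = 0 := by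
        have : p ∈ P ⊓ K := ⟨hp, hpK⟩
        rwa [hP, Submodule.mem_bot] at this
      have : (t : M) = (s' : M) := by rw [← hsp, hp0, add_zero, Submodule.subtype_apply]
      have : t = s' := Subtype.ext this
      rwa [this]
    have h1 : moduleLength R ↥K ≤ IsWellFounded.rank (α := Submodule R M) (· > ·) P := by
      have := rank_le_rank_of_strictMono hmono ⊥
      simpa [moduleLength, hg] using this
    have h2 : IsWellFounded.rank (α := Submodule R M) (· > ·) P
        < IsWellFounded.rank (α := Submodule R M) (· > ·) (⊥ : Submodule R M) :=
      IsWellFounded.rank_lt_of_rel (bot_lt_iff_ne_bot.mpr hPne)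
    rw [hker] at h1
    exact absurd (h1.trans_lt h2) (lt_irrefl _)
  -- the kernel chain stabilizes
  obtain ⟨n₀, hn₀⟩ := monotone_stabilizes_iff_noetherian.mpr ‹IsNoetherian R M›
    ⟨fun n => LinearMap.ker (f ^ n), by
        intro i j hij x hx
        simp only [LinearMap.mem_ker] at hx ⊢
        have : f ^ j = f ^ (j - i) * f ^ i := by rw [← pow_add, Nat.sub_add_cancel hij]
        rw [this, Module.End.mul_apply, hx, map_zero]⟩
  set n := n₀ + 1 with hn
  refine ⟨n, Nat.le_add_left 1 n₀, ?_⟩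
  have hkk : LinearMap.ker (f ^ n) = LinearMap.ker (f ^ (n + 1)) := by
    have e1 := hn₀ n (Nat.le_succ n₀)
    have e2 := hn₀ (n + 1) (by omega)
    exact e1.symm.trans e2
  have hmeet : LinearMap.range (f ^ n) ⊓ LinearMap.ker f = ⊥ := by
    rw [eq_bot_iff]
    rintro x ⟨⟨y, rfl⟩, hxk⟩
    have : y ∈ LinearMap.ker (f ^ (n + 1)) := by
      simp only [LinearMap.mem_ker] at hxk ⊢
      rw [pow_succ', Module.End.mul_apply]
      exact hxk
    rw [← hkk, LinearMap.mem_ker] at this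
    simp [this]
  have := hess _ hmeet
  rwa [LinearMap.range_eq_bot] at this
end

section
/- Product formula for foundation ranks: Let P and Q be partially ordered sets whose strict orders are well-founded (i.e. satisfying the descending chain condition), and endow P × Q with the product (componentwise) order. Then for all a ∈ P and b ∈ Q, the foundation rank of (a,b) in P × Q equals the natural (Hessenberg) sum of the ranks: rank_{P×Q}(a,b) = rank_P(a) ♯ rank_Q(b). -/
universe v

/-- Natural (Hessenberg) sum of ordinals, as `Ordinal.nadd` was defined in Mathlib (Dec 2024);
it has since been removed from Mathlib. -/
noncomputable def Ordinal.nadd : Ordinal.{v} → Ordinal.{v} → Ordinal.{v}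
  | a, b =>
    max (⨆ x : Set.Iio a, Order.succ (nadd x.1 b)) (⨆ x : Set.Iio b, Order.succ (nadd a x.1))
termination_by a b => (a, b)
decreasing_by
  · exact Prod.Lex.left _ _ x.2
  · exact Prod.Lex.right _ x.2

namespace NaturalOps

infixl:65 " ♯ " => Ordinal.nadd

end NaturalOps

open Ordinal NaturalOps

universe u

/-! Both sides obey the same recursion. The natural sum `α ♯ β` is the least ordinal above all
`α' ♯ β` and `α ♯ β'` with `α' < α`, `β' < β`; the rank of `(a, b)` is the least ordinal above
the ranks of all `(x, y) < (a, b)`, i.e. of pairs with one coordinate strictly and the other weakly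
smaller. Since ranks are monotone and `♯` is strictly monotone in each argument, a weakly smaller
coordinate costs nothing, and well-founded induction on `P × Q` gives each inequality. -/

namespace Ordinal

variable {a b c : Ordinal.{u}}

theorem nadd_def (a b : Ordinal.{u}) : a ♯ b =
    max (⨆ x : Set.Iio a, Order.succ (x.1 ♯ b)) (⨆ x : Set.Iio b, Order.succ (a ♯ x.1)) := by
  rw [Ordinal.nadd]

theorem nadd_lt_nadd_right (h : b < c) (a : Ordinal.{u}) : b ♯ a < c ♯ a := by
  rw [nadd_def c a]
  exact (Order.lt_succ _).trans_le
    (le_max_of_le_left (Ordinal.le_iSup (fun x : Set.Iio c => Order.succ (x.1 ♯ a)) ⟨b, h⟩))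

theorem nadd_lt_nadd_left (h : b < c) (a : Ordinal.{u}) : a ♯ b < a ♯ c := by
  rw [nadd_def a c]
  exact (Order.lt_succ _).trans_le
    (le_max_of_le_right (Ordinal.le_iSup (fun x : Set.Iio c => Order.succ (a ♯ x.1)) ⟨b, h⟩))

theorem nadd_le_nadd_right (h : b ≤ c) (a : Ordinal.{u}) : b ♯ a ≤ c ♯ a :=
  StrictMono.monotone (fun _ _ h => nadd_lt_nadd_right h a) h

theorem nadd_le_nadd_left (h : b ≤ c) (a : Ordinal.{u}) : a ♯ b ≤ a ♯ c :=
  StrictMono.monotone (fun _ _ h => nadd_lt_nadd_left h a) h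

theorem nadd_lt_nadd_of_lt_of_le {a' b' : Ordinal.{u}} (ha : a < a') (hb : b ≤ b') :
    a ♯ b < a' ♯ b' :=
  (nadd_lt_nadd_right ha b).trans_le (nadd_le_nadd_left hb a')

theorem nadd_lt_nadd_of_le_of_lt {a' b' : Ordinal.{u}} (ha : a ≤ a') (hb : b < b') :
    a ♯ b < a' ♯ b' :=
  (nadd_le_nadd_right ha b).trans_lt (nadd_lt_nadd_left hb a')

theorem lt_nadd_iff : a < b ♯ c ↔ (∃ b' < b, a ≤ b' ♯ c) ∨ ∃ c' < c, a ≤ b ♯ c' := by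
  constructor
  · intro h
    rw [nadd_def, lt_max_iff, Ordinal.lt_iSup_iff, Ordinal.lt_iSup_iff] at h
    rcases h with ⟨⟨b', hb'⟩, h⟩ | ⟨⟨c', hc'⟩, h⟩
    · exact Or.inl ⟨b', hb', Order.lt_succ_iff.1 h⟩
    · exact Or.inr ⟨c', hc', Order.lt_succ_iff.1 h⟩
  · rintro (⟨b', hb', h⟩ | ⟨c', hc', h⟩)
    · exact h.trans_lt (nadd_lt_nadd_right hb' c)
    · exact h.trans_lt (nadd_lt_nadd_left hc' b)

end Ordinal

namespace IsWellFounded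

variable {α : Type u} {r : α → α → Prop} [IsWellFounded α r]

theorem rank_le_iff {a : α} {o : Ordinal.{u}} : rank r a ≤ o ↔ ∀ b, r b a → rank r b < o := by
  simp only [rank_eq r a, Ordinal.iSup_le_iff, Order.succ_le_iff, Subtype.forall]

theorem lt_rank_iff {a : α} {o : Ordinal.{u}} : o < rank r a ↔ ∃ b, r b a ∧ o ≤ rank r b := by
  simp only [← not_le, rank_le_iff, not_forall, exists_prop, not_not]

end IsWellFounded

open IsWellFounded

theorem WellFoundedLT.rank_monotone {α : Type u} [Preorder α] [WellFoundedLT α] :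
    Monotone (rank (α := α) (· < ·)) :=
  fun _ _ h => rank_le_iff.2 fun _ hz => rank_lt_of_rel (hz.trans_le h)

section Prod

variable {P Q : Type u} [Preorder P] [Preorder Q] [WellFoundedLT P] [WellFoundedLT Q]

theorem rank_prod_le_nadd (p : P × Q) :
    rank (· < ·) p ≤ rank (· < ·) p.1 ♯ rank (· < ·) p.2 := by
  induction p using WellFoundedLT.induction with
  | _ p ih =>
  refine rank_le_iff.2 fun q hq => (ih q hq).trans_lt ?_
  rcases Prod.lt_iff.1 hq with ⟨h₁, h₂⟩ | ⟨h₁, h₂⟩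
  · exact nadd_lt_nadd_of_lt_of_le (rank_lt_of_rel h₁) (WellFoundedLT.rank_monotone h₂)
  · exact nadd_lt_nadd_of_le_of_lt (WellFoundedLT.rank_monotone h₁) (rank_lt_of_rel h₂)

theorem nadd_rank_le_rank_prod (p : P × Q) :
    rank (· < ·) p.1 ♯ rank (· < ·) p.2 ≤ rank (· < ·) p := by
  induction p using WellFoundedLT.induction with
  | _ p ih =>
  obtain ⟨a, b⟩ := p
  refine le_of_forall_lt fun o ho => ?_
  rcases lt_nadd_iff.1 ho with ⟨o', ho', ho⟩ | ⟨o', ho', ho⟩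
  · obtain ⟨x, hx, ho'⟩ := lt_rank_iff.1 ho'
    have hlt : (x, b) < (a, b) := Prod.mk_lt_mk_iff_left.2 hx
    calc o ≤ rank (· < ·) x ♯ rank (· < ·) b := ho.trans (nadd_le_nadd_right ho' _)
      _ ≤ rank (· < ·) (x, b) := ih _ hlt
      _ < rank (· < ·) (a, b) := rank_lt_of_rel hlt
  · obtain ⟨y, hy, ho'⟩ := lt_rank_iff.1 ho'
    have hlt : (a, y) < (a, b) := Prod.mk_lt_mk_iff_right.2 hy
    calc o ≤ rank (· < ·) a ♯ rank (· < ·) y := ho.trans (nadd_le_nadd_left ho' _)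
      _ ≤ rank (· < ·) (a, y) := ih _ hlt
      _ < rank (· < ·) (a, b) := rank_lt_of_rel hlt

end Prod

/-- **Product formula.** For well-founded partial orders `P` and `Q` and the componentwise
order on `P × Q`, the foundation rank of `(a, b)` is the natural (Hessenberg) sum of the
foundation ranks of `a` and `b`. -/
theorem rank_prod_eq_nadd (P Q : Type u) [PartialOrder P] [PartialOrder Q]
    [WellFoundedLT P] [WellFoundedLT Q] (a : P) (b : Q) :
    IsWellFounded.rank (α := P × Q) (· < ·) (a, b) =
      IsWellFounded.rank (α := P) (· < ·) a ♯ IsWellFounded.rank (α := Q) (· < ·) b :=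
  (rank_prod_le_nadd (a, b)).antisymm (nadd_rank_le_rank_prod (a, b))
end
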